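/- arXiv:2306.05353 — 2 statements merged into one kernel-verified Lean document; each statement's English description precedes it below -/
import Mathlib

section
/- Let S and U be nonempty finite types, let P be a transition kernel on S with actions U, let r be a reward function, let 0 ≤ γ < 1 and α > 0. Let π⁰ be any policy with π⁰ s u > 0 for all s, u, and define recursively: Q_k is the unique fixed point of Γ_{π^k}, and π^{k+1}(s,u) = exp(Q_k s u/α)/∑_{u'} exp(Q_k s u'/α). Then the sequence (Q_k) is pointwise nondecreasing and converges pointwise to Q*, the unique fixed point of the soft Bellman optimality operator Γ*; moreover Q* s u ≥ Q^π̂ s u for every policy π̂ (where Q^π̂ is the unique fixed point of Γ_{π̂}) and all s, u. (Paper's Theorem 6.3, SVNR Policy Iteration, where strictly nested negotiation realizes the Boltzmann improvement step.) -/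
/-!
Both soft Bellman operators satisfy the one-sided estimate `Q₁ - Q₂ ≤ M ⇒ Γ Q₁ - Γ Q₂ ≤ γ M`,
so they are monotone `γ`-contractions and `Q ≤ Γ Q` forces `Q` below the fixed point of `Γ`.
Gibbs' variational principle `∑ p (f - α log p) ≤ α log ∑ exp (f / α)`, with equality at the
Boltzmann distribution, gives `Γ_π ≤ Γ*` with equality for the Boltzmann policy of `Q`.
Hence `Q_k = Γ_{π_k} Q_k ≤ Γ* Q_k = Γ_{π_{k+1}} Q_k`, so `Q_k ≤ Q_{k+1}`, and likewise
`Q^π̂ ≤ Q*`. Finally `Γ* Q_k ≤ Q_{k+1} ≤ Q*`, so `Q* - Q_{k+1} ≤ Γ* Q* - Γ* Q_k` and the gap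
`Q* - Q_k` decays like `γ ^ k`.
-/

open Filter Topology

/-- The soft Bellman operator of a policy `π`. -/
noncomputable def softBellman {S U : Type*} [Fintype S] [Fintype U]
    (P : S → U → S → ℝ) (r : S → U → ℝ) (γ α : ℝ) (π : S → U → ℝ)
    (Q : S → U → ℝ) : S → U → ℝ :=
  fun s u => r s u +
    γ * ∑ s', P s u s' * ∑ u', π s' u' * (Q s' u' - α * Real.log (π s' u'))

/-- The soft Bellman optimality operator. -/
noncomputable def softBellmanOpt {S U : Type*} [Fintype S] [Fintype U]
    (P : S → U → S → ℝ) (r : S → U → ℝ) (γ α : ℝ)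
    (Q : S → U → ℝ) : S → U → ℝ :=
  fun s u => r s u +
    γ * ∑ s', P s u s' * (α * Real.log (∑ u', Real.exp (Q s' u' / α)))

open Finset

section Simplex

open Real

variable {ι : Type*} [Fintype ι]

lemma sum_mul_sub_sum_mul_le {w : ι → ℝ} (hw : w ∈ stdSimplex ℝ ι) {a b : ι → ℝ} {M : ℝ}
    (h : ∀ i, a i - b i ≤ M) : ∑ i, w i * a i - ∑ i, w i * b i ≤ M :=
  calc ∑ i, w i * a i - ∑ i, w i * b i = ∑ i, w i * (a i - b i) := by
        simp only [mul_sub, sum_sub_distrib]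
    _ ≤ ∑ i, w i * M := sum_le_sum fun i _ => mul_le_mul_of_nonneg_left (h i) (hw.1 i)
    _ = M := by rw [← sum_mul, hw.2, one_mul]

lemma mul_log_sub_log_le {p q : ℝ} (hp : 0 ≤ p) (hq : 0 < q) : p * (log q - log p) ≤ q - p := by
  rcases hp.eq_or_lt with rfl | hp
  · simpa using hq.le
  calc p * (log q - log p) = p * log (q / p) := by rw [log_div hq.ne' hp.ne']
    _ ≤ p * (q / p - 1) := mul_le_mul_of_nonneg_left (log_le_sub_one_of_pos (by positivity)) hp.le
    _ = q - p := by field_simp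

end Simplex

section Boltzmann

open Real

variable {U : Type*} [Fintype U] [Nonempty U]

noncomputable def boltzmann (α : ℝ) (f : U → ℝ) (u : U) : ℝ :=
  exp (f u / α) / ∑ u', exp (f u' / α)

lemma sum_exp_pos (f : U → ℝ) : 0 < ∑ u, exp (f u) :=
  sum_pos (fun _ _ => exp_pos _) univ_nonempty

lemma boltzmann_pos (α : ℝ) (f : U → ℝ) (u : U) : 0 < boltzmann α f u :=
  div_pos (exp_pos _) (sum_exp_pos _)

lemma boltzmann_mem_stdSimplex (α : ℝ) (f : U → ℝ) : boltzmann α f ∈ stdSimplex ℝ U :=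
  ⟨fun u => (boltzmann_pos α f u).le, by
    simp only [boltzmann, ← sum_div, div_self (sum_exp_pos _).ne']⟩

lemma log_boltzmann (α : ℝ) (f : U → ℝ) (u : U) :
    log (boltzmann α f u) = f u / α - log (∑ u', exp (f u' / α)) := by
  rw [boltzmann, log_div (exp_pos _).ne' (sum_exp_pos _).ne', log_exp]

/-- The entropy-regularised value of `p` falls short of the log-partition function by
`α` times the Kullback–Leibler divergence from `p` to the Boltzmann distribution. -/
lemma sum_mul_sub_mul_log_eq {α : ℝ} (hα : α ≠ 0) {p : U → ℝ} (hp : ∑ u, p u = 1)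
    (f : U → ℝ) :
    ∑ u, p u * (f u - α * log (p u)) = α * log (∑ u, exp (f u / α)) +
      α * ∑ u, p u * (log (boltzmann α f u) - log (p u)) := by
  simp only [log_boltzmann, mul_sum]
  rw [← one_mul (α * log _), ← hp, sum_mul, ← sum_add_distrib]
  refine sum_congr rfl fun u _ => ?_
  field_simp
  ring

theorem sum_mul_sub_mul_log_le {α : ℝ} (hα : 0 < α) {p : U → ℝ} (hp : p ∈ stdSimplex ℝ U)
    (f : U → ℝ) :
    ∑ u, p u * (f u - α * log (p u)) ≤ α * log (∑ u, exp (f u / α)) := by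
  have hKL : ∑ u, p u * (log (boltzmann α f u) - log (p u)) ≤ 0 :=
    calc _ ≤ ∑ u, (boltzmann α f u - p u) :=
          sum_le_sum fun u _ => mul_log_sub_log_le (hp.1 u) (boltzmann_pos α f u)
      _ = 0 := by rw [sum_sub_distrib, (boltzmann_mem_stdSimplex α f).2, hp.2, sub_self]
  rw [sum_mul_sub_mul_log_eq hα.ne' hp.2]
  nlinarith

theorem sum_boltzmann_mul_sub_mul_log {α : ℝ} (hα : α ≠ 0) (f : U → ℝ) :
    ∑ u, boltzmann α f u * (f u - α * log (boltzmann α f u)) =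
      α * log (∑ u, exp (f u / α)) := by
  simp [sum_mul_sub_mul_log_eq hα (boltzmann_mem_stdSimplex α f).2]

lemma mul_log_sum_exp_sub_le {α : ℝ} (hα : 0 < α) {f g : U → ℝ} {M : ℝ}
    (h : ∀ u, f u - g u ≤ M) :
    α * log (∑ u, exp (f u / α)) - α * log (∑ u, exp (g u / α)) ≤ M := by
  have hsum : ∑ u, exp (f u / α) ≤ exp (M / α) * ∑ u, exp (g u / α) := by
    rw [mul_sum]
    refine sum_le_sum fun u _ => ?_
    rw [← exp_add, ← add_div]
    exact exp_le_exp.2 (div_le_div_of_nonneg_right (by linarith [h u]) hα.le)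
  have hlog := log_le_log (sum_exp_pos _) hsum
  rw [log_mul (exp_pos _).ne' (sum_exp_pos _).ne', log_exp] at hlog
  have := mul_le_mul_of_nonneg_left hlog hα.le
  rw [mul_add, mul_div_cancel₀ _ hα.ne'] at this
  linarith

end Boltzmann

section Contraction

variable {S U : Type*} {γ : ℝ} {T : (S → U → ℝ) → S → U → ℝ}

/-- A one-sided form of `γ`-contraction in the sup norm; with `M = 0` it gives monotonicity. -/
def OneSidedContraction (γ : ℝ) (T : (S → U → ℝ) → S → U → ℝ) : Prop :=
  ∀ Q₁ Q₂ M, (∀ s u, Q₁ s u - Q₂ s u ≤ M) → ∀ s u, T Q₁ s u - T Q₂ s u ≤ γ * M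

namespace OneSidedContraction

lemma monotone (hT : OneSidedContraction γ T) : Monotone T := fun Q₁ Q₂ h s u => by
  have := hT Q₁ Q₂ 0 (fun s u => sub_nonpos.2 (h s u)) s u
  linarith

lemma exists_sub_le_pow_mul [Finite S] [Finite U] (hT : OneSidedContraction γ T)
    {Y Z : ℕ → S → U → ℝ}
    (h : ∀ k s u, Y (k + 1) s u - Z (k + 1) s u ≤ T (Y k) s u - T (Z k) s u) :
    ∃ M, ∀ k s u, Y k s u - Z k s u ≤ γ ^ k * M := by
  obtain ⟨M, hM⟩ := (Set.finite_range fun p : S × U => Y 0 p.1 p.2 - Z 0 p.1 p.2).bddAbove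
  refine ⟨M, fun k => ?_⟩
  induction k with
  | zero => simpa using fun s u => hM ⟨(s, u), rfl⟩
  | succ k ih =>
    intro s u
    calc Y (k + 1) s u - Z (k + 1) s u ≤ T (Y k) s u - T (Z k) s u := h k s u
      _ ≤ γ * (γ ^ k * M) := hT _ _ _ ih s u
      _ = γ ^ (k + 1) * M := by ring

variable [Finite S] [Finite U] {F : S → U → ℝ}

lemma le_of_le_apply (hT : OneSidedContraction γ T) (hγ₀ : 0 ≤ γ) (hγ₁ : γ < 1)
    (hF : T F = F) {X : S → U → ℝ} (hX : X ≤ T X) : X ≤ F := by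
  obtain ⟨M, hM⟩ := hT.exists_sub_le_pow_mul (Y := fun _ => X) (Z := fun _ => F)
    fun _ s u => by rw [hF]; linarith [hX s u]
  intro s u
  have hlim : Tendsto (fun k => γ ^ k * M) atTop (𝓝 0) := by
    simpa using (tendsto_pow_atTop_nhds_zero_of_lt_one hγ₀ hγ₁).mul_const M
  linarith [ge_of_tendsto' hlim fun k => hM k s u]

lemma tendsto_of_apply_le (hT : OneSidedContraction γ T) (hγ₀ : 0 ≤ γ) (hγ₁ : γ < 1)
    (hF : T F = F) {X : ℕ → S → U → ℝ} (hXF : ∀ k, X k ≤ F) (hX : ∀ k, T (X k) ≤ X (k + 1))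
    (s : S) (u : U) : Tendsto (fun k => X k s u) atTop (𝓝 (F s u)) := by
  obtain ⟨M, hM⟩ := hT.exists_sub_le_pow_mul (Y := fun _ => F) (Z := X)
    fun k s u => by rw [hF]; linarith [hX k s u]
  have hlim : Tendsto (fun k => F s u - γ ^ k * M) atTop (𝓝 (F s u)) := by
    simpa using ((tendsto_pow_atTop_nhds_zero_of_lt_one hγ₀ hγ₁).mul_const M).const_sub (F s u)
  refine tendsto_of_tendsto_of_tendsto_of_le_of_le hlim tendsto_const_nhds
    (fun k => ?_) (fun k => hXF k s u)
  linarith [hM k s u]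

end OneSidedContraction

end Contraction

section SoftBellman

variable {S U : Type*} [Fintype S] {P : S → U → S → ℝ} {r : S → U → ℝ} {γ α : ℝ}

lemma add_mul_sum_sub_add_mul_sum_le (hP : ∀ s u, P s u ∈ stdSimplex ℝ S) (hγ : 0 ≤ γ)
    {V₁ V₂ : S → ℝ} {M : ℝ} (h : ∀ s', V₁ s' - V₂ s' ≤ M) (s : S) (u : U) :
    (r s u + γ * ∑ s', P s u s' * V₁ s') - (r s u + γ * ∑ s', P s u s' * V₂ s') ≤ γ * M := by
  have := mul_le_mul_of_nonneg_left (sum_mul_sub_sum_mul_le (hP s u) h) hγ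
  linarith

variable [Fintype U]

lemma oneSidedContraction_softBellman (hP : ∀ s u, P s u ∈ stdSimplex ℝ S) (hγ : 0 ≤ γ)
    {π : S → U → ℝ} (hπ : ∀ s, π s ∈ stdSimplex ℝ U) :
    OneSidedContraction γ (softBellman P r γ α π) := fun _ _ _ h =>
  add_mul_sum_sub_add_mul_sum_le hP hγ fun s' =>
    sum_mul_sub_sum_mul_le (hπ s') fun u' => by linarith [h s' u']

variable [Nonempty U]

lemma oneSidedContraction_softBellmanOpt (hP : ∀ s u, P s u ∈ stdSimplex ℝ S) (hγ : 0 ≤ γ)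
    (hα : 0 < α) : OneSidedContraction γ (softBellmanOpt P r γ α) := fun _ _ _ h =>
  add_mul_sum_sub_add_mul_sum_le hP hγ fun s' => mul_log_sum_exp_sub_le hα (h s')

lemma softBellman_le_softBellmanOpt (hP : ∀ s u s', 0 ≤ P s u s') (hγ : 0 ≤ γ) (hα : 0 < α)
    {π : S → U → ℝ} (hπ : ∀ s, π s ∈ stdSimplex ℝ U) (Q : S → U → ℝ) :
    softBellman P r γ α π Q ≤ softBellmanOpt P r γ α Q := fun s u =>
  add_le_add_right (mul_le_mul_of_nonneg_left (sum_le_sum fun s' _ =>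
    mul_le_mul_of_nonneg_left (sum_mul_sub_mul_log_le hα (hπ s') (Q s')) (hP s u s')) hγ) _

lemma softBellman_boltzmann (hα : α ≠ 0) (Q : S → U → ℝ) :
    softBellman P r γ α (fun s => boltzmann α (Q s)) Q = softBellmanOpt P r γ α Q := by
  funext s u
  simp only [softBellman, softBellmanOpt, sum_boltzmann_mul_sub_mul_log hα (Q _)]

end SoftBellman

theorem svnr_policy_iteration_general
    {S U : Type*} [Fintype S] [Fintype U] [Nonempty U]
    (P : S → U → S → ℝ) (hP0 : ∀ s u s', 0 ≤ P s u s')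
    (hP1 : ∀ s u, ∑ s', P s u s' = 1)
    (r : S → U → ℝ) (γ α : ℝ) (hγ0 : 0 ≤ γ) (hγ1 : γ < 1) (hα : 0 < α)
    -- the sequence of policies, starting from an arbitrary everywhere-positive policy
    (π : ℕ → S → U → ℝ)
    (hπ0pos : ∀ s u, 0 < π 0 s u) (hπ0sum : ∀ s, ∑ u, π 0 s u = 1)
    -- `Q k` is the (unique) fixed point of the soft Bellman operator of `π k`
    (Q : ℕ → S → U → ℝ)
    (hQfix : ∀ k, softBellman P r γ α (π k) (Q k) = Q k)
    -- Boltzmann policy improvement (the agreement of strictly nested Stein negotiation)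
    (hπsucc : ∀ k s u,
      π (k + 1) s u = Real.exp (Q k s u / α) / ∑ u', Real.exp (Q k s u' / α))
    -- `Qstar` is the (unique) fixed point of the soft Bellman optimality operator
    (Qstar : S → U → ℝ) (hQstar : softBellmanOpt P r γ α Qstar = Qstar) :
    (∀ k s u, Q k s u ≤ Q (k + 1) s u) ∧
    (∀ s u, Tendsto (fun k => Q k s u) atTop (𝓝 (Qstar s u))) ∧
    (∀ πhat : S → U → ℝ, (∀ s u, 0 ≤ πhat s u) → (∀ s, ∑ u, πhat s u = 1) →
      ∀ Qhat : S → U → ℝ, softBellman P r γ α πhat Qhat = Qhat →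
        ∀ s u, Qhat s u ≤ Qstar s u) := by
  have hP : ∀ s u, P s u ∈ stdSimplex ℝ S := fun s u => ⟨hP0 s u, hP1 s u⟩
  have hπ_succ : ∀ k, π (k + 1) = fun s => boltzmann α (Q k s) :=
    fun k => funext₂ (hπsucc k)
  have hπ : ∀ k s, π k s ∈ stdSimplex ℝ U := by
    rintro (_ | k) s
    · exact ⟨fun u => (hπ0pos s u).le, hπ0sum s⟩
    · rw [hπ_succ k]
      exact boltzmann_mem_stdSimplex α (Q k s)
  have hΓ k := oneSidedContraction_softBellman (r := r) (α := α) hP hγ0 (hπ k)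
  have hΓopt := oneSidedContraction_softBellmanOpt (r := r) hP hγ0 hα
  have hΓ_succ k : softBellman P r γ α (π (k + 1)) (Q k) = softBellmanOpt P r γ α (Q k) := by
    rw [hπ_succ]
    exact softBellman_boltzmann hα.ne' (Q k)
  have hopt πhat (hπhat0 : ∀ s u, 0 ≤ πhat s u) (hπhat1 : ∀ s, ∑ u, πhat s u = 1) Qhat
      (hQhat : softBellman P r γ α πhat Qhat = Qhat) : Qhat ≤ Qstar :=
    hΓopt.le_of_le_apply hγ0 hγ1 hQstar <| by
      calc Qhat = softBellman P r γ α πhat Qhat := hQhat.symm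
        _ ≤ softBellmanOpt P r γ α Qhat :=
          softBellman_le_softBellmanOpt hP0 hγ0 hα (fun s => ⟨hπhat0 s, hπhat1 s⟩) Qhat
  have hmono k : Q k ≤ Q (k + 1) := (hΓ (k + 1)).le_of_le_apply hγ0 hγ1 (hQfix (k + 1)) <|
    calc Q k = softBellman P r γ α (π k) (Q k) := (hQfix k).symm
      _ ≤ softBellmanOpt P r γ α (Q k) := softBellman_le_softBellmanOpt hP0 hγ0 hα (hπ k) _
      _ = softBellman P r γ α (π (k + 1)) (Q k) := (hΓ_succ k).symm
  refine ⟨hmono, hΓopt.tendsto_of_apply_le hγ0 hγ1 hQstar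
    (fun k => hopt _ (fun s => (hπ k s).1) (fun s => (hπ k s).2) _ (hQfix k)) fun k => ?_, hopt⟩
  calc softBellmanOpt P r γ α (Q k) = softBellman P r γ α (π (k + 1)) (Q k) := (hΓ_succ k).symm
    _ ≤ softBellman P r γ α (π (k + 1)) (Q (k + 1)) := (hΓ (k + 1)).monotone (hmono k)
    _ = Q (k + 1) := hQfix (k + 1)

theorem svnr_policy_iteration
    {S U : Type*} [Fintype S] [Fintype U] [Nonempty S] [Nonempty U]
    (P : S → U → S → ℝ) (hP0 : ∀ s u s', 0 ≤ P s u s')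
    (hP1 : ∀ s u, ∑ s', P s u s' = 1)
    (r : S → U → ℝ) (γ α : ℝ) (hγ0 : 0 ≤ γ) (hγ1 : γ < 1) (hα : 0 < α)
    -- the sequence of policies, starting from an arbitrary everywhere-positive policy
    (π : ℕ → S → U → ℝ)
    (hπ0pos : ∀ s u, 0 < π 0 s u) (hπ0sum : ∀ s, ∑ u, π 0 s u = 1)
    -- `Q k` is the (unique) fixed point of the soft Bellman operator of `π k`
    (Q : ℕ → S → U → ℝ)
    (hQfix : ∀ k, softBellman P r γ α (π k) (Q k) = Q k)
    -- Boltzmann policy improvement (the agreement of strictly nested Stein negotiation)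
    (hπsucc : ∀ k s u,
      π (k + 1) s u = Real.exp (Q k s u / α) / ∑ u', Real.exp (Q k s u' / α))
    -- `Qstar` is the (unique) fixed point of the soft Bellman optimality operator
    (Qstar : S → U → ℝ) (hQstar : softBellmanOpt P r γ α Qstar = Qstar) :
    (∀ k s u, Q k s u ≤ Q (k + 1) s u) ∧
    (∀ s u, Tendsto (fun k => Q k s u) atTop (𝓝 (Qstar s u))) ∧
    (∀ πhat : S → U → ℝ, (∀ s u, 0 ≤ πhat s u) → (∀ s, ∑ u, πhat s u = 1) →
      ∀ Qhat : S → U → ℝ, softBellman P r γ α πhat Qhat = Qhat →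
        ∀ s u, Qhat s u ≤ Qstar s u) :=
  svnr_policy_iteration_general P hP0 hP1 r γ α hγ0 hγ1 hα π hπ0pos hπ0sum Q hQfix hπsucc Qstar
    hQstar
end

section
/- Let S and U be nonempty finite types, let P be a transition kernel on S with actions U, let r be a reward function, let 0 ≤ γ < 1 and α > 0, and let π be a policy. If Q = Γ_π Q, then ‖Q‖∞ ≤ (max_{s,u} |r s u| + γ·α·log(card U)) / (1 − γ). (Uniform boundedness of soft Q-functions, which gives the boundedness needed for the convergence of soft policy iteration.) -/
/-- The sup norm `‖Q‖∞ = max_{s,u} |Q s u|`. -/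
noncomputable def supNorm {S U : Type*} [Fintype S] [Fintype U] [Nonempty S] [Nonempty U]
    (Q : S → U → ℝ) : ℝ :=
  Finset.univ.sup' Finset.univ_nonempty (fun p : S × U => |Q p.1 p.2|)

/-!
Split the soft Bellman backup at a state `s'` as `∑ π Q + α · H(π s')`, where `H` is the Shannon
entropy. The first term is an average of values of `Q`, so it is bounded by `‖Q‖∞`, and
`0 ≤ H ≤ log (card U)` by Jensen's inequality for the concave function `negMulLog`. Averaging
over `P` and adding the reward gives `‖Q‖∞ ≤ ‖r‖∞ + γ (‖Q‖∞ + α log (card U))` for a fixed point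
`Q`, which rearranges to the bound since `γ < 1`.
-/

open Finset

section WeightedSums

variable {ι : Type*} [Fintype ι] {w : ι → ℝ}

lemma abs_sum_mul_le_of_abs_le {f : ι → ℝ} {M : ℝ} (h0 : ∀ i, 0 ≤ w i) (h1 : ∑ i, w i = 1)
    (hf : ∀ i, |f i| ≤ M) : |∑ i, w i * f i| ≤ M :=
  calc |∑ i, w i * f i| ≤ ∑ i, |w i * f i| := abs_sum_le_sum_abs _ _
    _ = ∑ i, w i * |f i| := by simp only [abs_mul, abs_of_nonneg (h0 _)]
    _ ≤ ∑ i, w i * M := sum_le_sum fun i _ => mul_le_mul_of_nonneg_left (hf i) (h0 i)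
    _ = M := by rw [← sum_mul, h1, one_mul]

lemma sum_negMulLog_nonneg (h0 : ∀ i, 0 ≤ w i) (h1 : ∑ i, w i = 1) :
    0 ≤ ∑ i, Real.negMulLog (w i) :=
  sum_nonneg fun i _ =>
    Real.negMulLog_nonneg (h0 i) (h1 ▸ single_le_sum (fun j _ => h0 j) (mem_univ i))

lemma sum_negMulLog_le_log_card (h0 : ∀ i, 0 ≤ w i) (h1 : ∑ i, w i = 1) :
    ∑ i, Real.negMulLog (w i) ≤ Real.log (Fintype.card ι) := by
  set n : ℝ := (Fintype.card ι : ℝ)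
  have : Nonempty ι := by
    by_contra hempty
    simp [not_nonempty_iff.mp hempty] at h1
  have hn : 0 < n := Nat.cast_pos.mpr Fintype.card_pos
  have jensen : ∑ i, n⁻¹ * Real.negMulLog (w i) ≤ Real.negMulLog (∑ i, n⁻¹ * w i) :=
    Real.concaveOn_negMulLog.le_map_sum (fun _ _ => by positivity)
      (by simp [n, hn.ne']) (fun i _ => Set.mem_Ici.mpr (h0 i))
  rw [← mul_sum, ← mul_sum, h1, mul_one, Real.negMulLog, Real.log_inv, neg_mul_neg] at jensen
  exact le_of_mul_le_mul_left jensen (inv_pos.mpr hn)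

lemma abs_sum_mul_sub_mul_log_le {f : ι → ℝ} {M α : ℝ} (h0 : ∀ i, 0 ≤ w i)
    (h1 : ∑ i, w i = 1) (hα : 0 ≤ α) (hf : ∀ i, |f i| ≤ M) :
    |∑ i, w i * (f i - α * Real.log (w i))| ≤ M + α * Real.log (Fintype.card ι) := by
  have hsplit : ∑ i, w i * (f i - α * Real.log (w i)) =
      ∑ i, w i * f i + α * ∑ i, Real.negMulLog (w i) := by
    simp only [mul_sum, ← sum_add_distrib, Real.negMulLog]
    exact sum_congr rfl fun i _ => by ring
  have hH : 0 ≤ α * ∑ i, Real.negMulLog (w i) := mul_nonneg hα (sum_negMulLog_nonneg h0 h1)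
  calc |∑ i, w i * (f i - α * Real.log (w i))|
      ≤ |∑ i, w i * f i| + |α * ∑ i, Real.negMulLog (w i)| := hsplit ▸ abs_add_le _ _
    _ ≤ M + α * Real.log (Fintype.card ι) := by
      rw [abs_of_nonneg hH]
      exact add_le_add (abs_sum_mul_le_of_abs_le h0 h1 hf)
        (mul_le_mul_of_nonneg_left (sum_negMulLog_le_log_card h0 h1) hα)

end WeightedSums

section SupNorm

variable {S U : Type*} [Fintype S] [Fintype U] [Nonempty S] [Nonempty U]

lemma abs_le_supNorm (Q : S → U → ℝ) (s : S) (u : U) : |Q s u| ≤ supNorm Q :=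
  le_sup' (fun p : S × U => |Q p.1 p.2|) (mem_univ (s, u))

lemma supNorm_le {Q : S → U → ℝ} {c : ℝ} (h : ∀ s u, |Q s u| ≤ c) : supNorm Q ≤ c :=
  sup'_le _ _ fun p _ => h p.1 p.2

lemma supNorm_softBellman_le {P : S → U → S → ℝ} (hP0 : ∀ s u s', 0 ≤ P s u s')
    (hP1 : ∀ s u, ∑ s', P s u s' = 1) (r : S → U → ℝ) {γ α : ℝ} (hγ : 0 ≤ γ) (hα : 0 ≤ α)
    {π : S → U → ℝ} (hπ0 : ∀ s u, 0 ≤ π s u) (hπ1 : ∀ s, ∑ u, π s u = 1) (Q : S → U → ℝ) :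
    supNorm (softBellman P r γ α π Q) ≤
      supNorm r + γ * (supNorm Q + α * Real.log (Fintype.card U)) := by
  refine supNorm_le fun s u => ?_
  have hbackup := abs_sum_mul_le_of_abs_le (hP0 s u) (hP1 s u) fun s' =>
    abs_sum_mul_sub_mul_log_le (hπ0 s') (hπ1 s') hα (abs_le_supNorm Q s')
  calc |softBellman P r γ α π Q s u|
      ≤ |r s u| + |γ * ∑ s', P s u s' * ∑ u', π s' u' * (Q s' u' - α * Real.log (π s' u'))| :=
        abs_add_le _ _
    _ ≤ supNorm r + γ * (supNorm Q + α * Real.log (Fintype.card U)) := by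
      rw [abs_mul, abs_of_nonneg hγ]
      exact add_le_add (abs_le_supNorm r s u) (mul_le_mul_of_nonneg_left hbackup hγ)

end SupNorm

theorem soft_Q_function_bound
    {S U : Type*} [Fintype S] [Fintype U] [Nonempty S] [Nonempty U]
    (P : S → U → S → ℝ) (hP0 : ∀ s u s', 0 ≤ P s u s')
    (hP1 : ∀ s u, ∑ s', P s u s' = 1)
    (r : S → U → ℝ) (γ α : ℝ) (hγ0 : 0 ≤ γ) (hγ1 : γ < 1) (hα : 0 < α)
    (π : S → U → ℝ) (hπ0 : ∀ s u, 0 ≤ π s u) (hπ1 : ∀ s, ∑ u, π s u = 1)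
    (Q : S → U → ℝ) (hQ : Q = softBellman P r γ α π Q) :
    supNorm Q ≤ (supNorm r + γ * α * Real.log (Fintype.card U)) / (1 - γ) := by
  have hfix := supNorm_softBellman_le hP0 hP1 r hγ0 hα.le hπ0 hπ1 Q
  rw [← hQ] at hfix
  rw [le_div_iff₀ (sub_pos.mpr hγ1)]
  linarith
end
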